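/- For the Markov chain on {0,…,n} where from state i one moves to i+1 with probability (n−i)/(n+1) and absorbs with probability (i+1)/(n+1), the expected number of transitions before absorption, starting from state 0, is at most C·√n for some absolute constant C (e.g., C can be taken so the bound is asymptotically (√(πn))/4 up to lower order terms). -/

import Mathlib

/-!
Write `Q k = ∏_{i<k} (n - i)/(n + 1)` for the probability of surviving `k` transitions. The
probability of absorption at step `j` is `Q (j-1) - Q j`, so summation by parts bounds the
expected time by `∑_{k<n} Q k`. All factors are at most `1`, and from index `K` on they are at
most `r = (n - K)/(n + 1)`; hence `Q k ≤ r ^ (k - K)` and `∑_{k<n} Q k ≤ K + (n + 1)/(K + 1)`.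
The choice `K = ⌊√n⌋` gives `3 √n`.
-/

open Finset

theorem Finset.sum_Icc_mul_sub_eq {R : Type*} [CommRing R] (f : ℕ → R) (N : ℕ) :
    ∑ j ∈ Icc 1 N, (j : R) * (f (j - 1) - f j) = ∑ k ∈ range N, f k - N * f N := by
  induction N with
  | zero => simp
  | succ N ih =>
    rw [sum_Icc_succ_top (by omega), ih, sum_range_succ, Nat.add_sub_cancel]
    push_cast
    ring

theorem Finset.prod_range_le_pow_tsub {g : ℕ → ℝ} {r : ℝ} {K k : ℕ} (hr : 0 ≤ r)
    (hg₀ : ∀ i < k, 0 ≤ g i) (hg₁ : ∀ i < k, g i ≤ 1) (hgr : ∀ i < k, K ≤ i → g i ≤ r) :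
    ∏ i ∈ range k, g i ≤ r ^ (k - K) := by
  induction k with
  | zero => simp
  | succ k ih =>
    rw [prod_range_succ]
    have ih' := ih (fun i hi => hg₀ i (by omega)) (fun i hi => hg₁ i (by omega))
      (fun i hi => hgr i (by omega))
    rcases lt_or_ge k K with hkK | hKk
    · rw [Nat.sub_eq_zero_of_le hkK.le] at ih'
      rw [Nat.sub_eq_zero_of_le hkK]
      simpa using mul_le_one₀ ih' (hg₀ k (by omega)) (hg₁ k (by omega))
    · rw [Nat.sub_add_comm hKk, pow_succ]
      exact mul_le_mul ih' (hgr k (by omega) hKk) (hg₀ k (by omega)) (pow_nonneg hr _)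

theorem sum_range_pow_tsub_le {r : ℝ} (hr₀ : 0 ≤ r) (hr₁ : r < 1) (K N : ℕ) :
    ∑ k ∈ range N, r ^ (k - K) ≤ K + 1 / (1 - r) := by
  calc ∑ k ∈ range N, r ^ (k - K)
      ≤ ∑ k ∈ range (K + N), r ^ (k - K) :=
        sum_le_sum_of_subset_of_nonneg (range_subset_range.2 (by omega))
          fun _ _ _ => pow_nonneg hr₀ _
    _ = K + ∑ j ∈ range N, r ^ j := by
        rw [sum_range_add]
        congr 1
        · rw [sum_congr rfl fun k hk => by rw [Nat.sub_eq_zero_of_le (mem_range.1 hk).le]]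
          simp
        · simp
    _ ≤ K + 1 / (1 - r) := by
        have := geom_sum_Ico_le_of_lt_one (m := 0) (n := N) hr₀ hr₁
        rw [← range_eq_Ico, pow_zero] at this
        linarith

theorem add_div_nat_sqrt_succ_le (n : ℕ) (hn : 1 ≤ n) :
    (Nat.sqrt n : ℝ) + ((n : ℝ) + 1) / (Nat.sqrt n + 1) ≤ 3 * Real.sqrt n := by
  have hK : (Nat.sqrt n : ℝ) ≤ Real.sqrt n := Real.nat_sqrt_le_real_sqrt
  have hK' : Real.sqrt n < Nat.sqrt n + 1 := Real.real_sqrt_lt_nat_sqrt_succ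
  have hn' : (1 : ℝ) ≤ n := by exact_mod_cast hn
  have hs : 0 < Real.sqrt n := Real.sqrt_pos.2 (by linarith)
  have hsq : Real.sqrt n * Real.sqrt n = n := Real.mul_self_sqrt (by linarith)
  have : ((n : ℝ) + 1) / (Nat.sqrt n + 1) ≤ 2 * Real.sqrt n := by
    rw [div_le_iff₀ (by positivity)]
    nlinarith
  linarith

namespace AbsorbingChain

noncomputable def survivalProb (n k : ℕ) : ℝ :=
  ∏ i ∈ range k, ((n : ℝ) - i) / (n + 1)

variable {n : ℕ}

theorem sub_div_succ_nonneg {i : ℕ} (hi : i ≤ n) : 0 ≤ ((n : ℝ) - i) / (n + 1) :=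
  div_nonneg (sub_nonneg.2 (by exact_mod_cast hi)) (by positivity)

theorem survivalProb_nonneg {k : ℕ} (hk : k ≤ n) : 0 ≤ survivalProb n k :=
  prod_nonneg fun _ hi => sub_div_succ_nonneg ((mem_range.1 hi).le.trans hk)

theorem survivalProb_sub_succ (n m : ℕ) :
    survivalProb n m - survivalProb n (m + 1) = ((m : ℝ) + 1) / (n + 1) * survivalProb n m := by
  simp only [survivalProb, prod_range_succ]
  field_simp
  ring

theorem expected_time_le_sum_survivalProb (n : ℕ) :
    ∑ j ∈ Icc 1 n, (j : ℝ) * ((j : ℝ) / (n + 1) * survivalProb n (j - 1)) ≤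
      ∑ k ∈ range n, survivalProb n k := by
  have hterm : ∀ j ∈ Icc 1 n, (j : ℝ) * ((j : ℝ) / (n + 1) * survivalProb n (j - 1)) =
      j * (survivalProb n (j - 1) - survivalProb n j) := by
    intro j hj
    obtain ⟨m, rfl⟩ : ∃ m, j = m + 1 := ⟨j - 1, by grind⟩
    rw [Nat.add_sub_cancel, survivalProb_sub_succ]
    push_cast
    ring
  rw [sum_congr rfl hterm, sum_Icc_mul_sub_eq]
  exact sub_le_self _ (mul_nonneg n.cast_nonneg (survivalProb_nonneg le_rfl))

theorem sum_survivalProb_le {K : ℕ} (hK : K ≤ n) :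
    ∑ k ∈ range n, survivalProb n k ≤ K + ((n : ℝ) + 1) / (K + 1) := by
  set r : ℝ := ((n : ℝ) - K) / (n + 1)
  have hr₀ : 0 ≤ r := sub_div_succ_nonneg hK
  have hr₁ : r < 1 := (div_lt_one (by positivity)).2 (by linarith [K.cast_nonneg (α := ℝ)])
  have hsub : 1 - r = ((K : ℝ) + 1) / (n + 1) := by
    simp only [r]
    field_simp
    ring
  have hbound : ∀ k ∈ range n, survivalProb n k ≤ r ^ (k - K) := fun k hk =>
    prod_range_le_pow_tsub hr₀
      (fun i hi => sub_div_succ_nonneg (by grind))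
      (fun i _ => (div_le_one (by positivity)).2 (by linarith [i.cast_nonneg (α := ℝ)]))
      (fun i _ hKi => div_le_div_of_nonneg_right (by linarith [(Nat.cast_le (α := ℝ)).2 hKi])
        (by positivity))
  calc ∑ k ∈ range n, survivalProb n k ≤ ∑ k ∈ range n, r ^ (k - K) := sum_le_sum hbound
    _ ≤ K + 1 / (1 - r) := sum_range_pow_tsub_le hr₀ hr₁ K n
    _ = K + ((n : ℝ) + 1) / (K + 1) := by rw [hsub, one_div_div]

end AbsorbingChain

open AbsorbingChain

/-- For the absorbing chain on `{0, …, n}` with `p_{i,i+1} = (n-i)/(n+1)` and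
`p_{i,n} = (i+1)/(n+1)`, the expected number of transitions until absorption,
`Σ_{j=1}^n j · P_j` with `P_j = (j/(n+1)) ∏_{i=0}^{j-2} (n-i)/(n+1)`, is at most
`C · √n` for an absolute constant `C > 0`. -/
theorem expected_absorption_le_sqrt :
    ∃ C > 0, ∀ n : ℕ, 1 ≤ n →
      ∑ j ∈ Finset.Icc 1 n, (j : ℝ) *
          (((j : ℝ) / ((n : ℝ) + 1)) *
            ∏ i ∈ Finset.range (j - 1), ((n : ℝ) - (i : ℝ)) / ((n : ℝ) + 1)) ≤
        C * Real.sqrt n := by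
  refine ⟨3, by norm_num, fun n hn => ?_⟩
  calc _ ≤ ∑ k ∈ range n, survivalProb n k := expected_time_le_sum_survivalProb n
    _ ≤ Nat.sqrt n + ((n : ℝ) + 1) / (Nat.sqrt n + 1) := sum_survivalProb_le (Nat.sqrt_le_self n)
    _ ≤ 3 * Real.sqrt n := add_div_nat_sqrt_succ_le n hn
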